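/- In the NAG dynamics with α_t = t, where R^p ≤ 4 log n + Σ_{t=1}^T (t²/8)‖w_t - w_{t-1}‖_2² and R^w ≤ -Σ_{t=1}^T (t(t-1)/4)‖w_t - w_{t-1}‖_2², and ‖w_1‖_2 ≤ 1, the total average regret satisfies (R^w + R^p)/(Σ_t α_t) ≤ (8 log n + 2)/(T(T+1)). -/
import Mathlib


/-- Total average regret of the NAG dynamics with `α t = t`: from the player regret
bounds `R^p ≤ 4 log n + ∑ (t²/8)‖w t - w (t-1)‖²` and
`R^w ≤ -∑ (t(t-1)/4)‖w t - w (t-1)‖²`, together with `w 0 = 0` and `‖w 1‖ ≤ 1`,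
we get `(R^w + R^p)/(∑ α t) ≤ (8 log n + 2)/(T(T+1))`. -/
theorem nag_total_regret {d n T : ℕ} [NeZero n] (hT : 1 ≤ T)
    (w : ℕ → EuclideanSpace ℝ (Fin d)) (hw0 : w 0 = 0) (hw1 : ‖w 1‖ ≤ 1)
    (Rw Rp : ℝ)
    (hRp : Rp ≤ 4 * Real.log n +
      ∑ t ∈ Finset.Icc 1 T, ((t : ℝ) ^ 2 / 8) * ‖w t - w (t - 1)‖ ^ 2)
    (hRw : Rw ≤ -∑ t ∈ Finset.Icc 1 T,
      ((t : ℝ) * ((t : ℝ) - 1) / 4) * ‖w t - w (t - 1)‖ ^ 2) :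
    (Rw + Rp) / ((T : ℝ) * (T + 1) / 2) ≤
      (8 * Real.log n + 2) / ((T : ℝ) * (T + 1)) := by
  have hTpos : (0 : ℝ) < T := by exact_mod_cast hT
  have hD : (0 : ℝ) < (T : ℝ) * (T + 1) / 2 := by positivity
  -- combine the two sums
  have hsum : ∑ t ∈ Finset.Icc 1 T, ((t : ℝ) ^ 2 / 8) * ‖w t - w (t - 1)‖ ^ 2
      - ∑ t ∈ Finset.Icc 1 T, ((t : ℝ) * ((t : ℝ) - 1) / 4) * ‖w t - w (t - 1)‖ ^ 2
      ≤ 1 := by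
    rw [← Finset.sum_sub_distrib]
    have : ∀ t ∈ Finset.Icc 1 T,
        ((t : ℝ) ^ 2 / 8) * ‖w t - w (t - 1)‖ ^ 2
        - ((t : ℝ) * ((t : ℝ) - 1) / 4) * ‖w t - w (t - 1)‖ ^ 2
        ≤ if t = 1 then (1 : ℝ) else 0 := by
      intro t ht
      rcases eq_or_ne t 1 with rfl | h1
      · simp only [if_pos rfl]
        have : ‖w 1 - w 0‖ ^ 2 ≤ 1 := by
          rw [hw0, sub_zero]
          nlinarith [norm_nonneg (w 1)]
        push_cast
        nlinarith [sq_nonneg ‖w 1 - w 0‖]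
      · simp only [if_neg h1]
        have ht1 := (Finset.mem_Icc.mp ht).1
        have ht2 : 2 ≤ t := by omega
        have ht2' : (2 : ℝ) ≤ t := by exact_mod_cast ht2
        have hc : (t : ℝ) ^ 2 / 8 - (t : ℝ) * ((t : ℝ) - 1) / 4 ≤ 0 := by nlinarith
        nlinarith [sq_nonneg ‖w t - w (t - 1)‖]
    calc _ ≤ ∑ t ∈ Finset.Icc 1 T, if t = 1 then (1 : ℝ) else 0 :=
          Finset.sum_le_sum this
      _ = 1 := by
          rw [Finset.sum_ite_eq' (Finset.Icc 1 T) 1 (fun _ => (1:ℝ))]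
          simp [hT]
  have hnum : Rw + Rp ≤ 4 * Real.log n + 1 := by linarith
  have key : (Rw + Rp) / ((T : ℝ) * (T + 1) / 2)
      ≤ (4 * Real.log n + 1) / ((T : ℝ) * (T + 1) / 2) := by gcongr
  refine key.trans_eq ?_
  field_simp
  ring
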